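/- If G is a finite simple connected bipartite graph with partite sets A and B satisfying |A| ≥ |B|, then for any finite simple graph H, ξ(G⊙H) = |B|·n(H) + |A|. -/

import Mathlib

universe u v

variable {V : Type u} {W : Type v}

/-- A distance-equalizer set of a graph: for every pair of distinct vertices outside `S`
there is a vertex of `S` equidistant to both. -/
def IsDistEqSet {α : Type*} (G : SimpleGraph α) (S : Set α) : Prop :=
  ∀ ⦃x y : α⦄, x ∉ S → y ∉ S → x ≠ y → ∃ w ∈ S, G.dist w x = G.dist w y

/-- The equidistant dimension of a graph: the minimum cardinality of a distance-equalizer set. -/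
noncomputable def eqdim {α : Type*} (G : SimpleGraph α) : ℕ :=
  sInf {n | ∃ S : Set α, IsDistEqSet G S ∧ S.ncard = n}

/-- The bisector of two vertices: vertices equidistant to both. -/
def bisector {α : Type*} (G : SimpleGraph α) (x y : α) : Set α :=
  {w | G.dist w x = G.dist w y}

/-- The empty bisector graph of `G`: two distinct vertices are adjacent iff their bisector
in `G` is empty. -/
def emptyBisector {α : Type*} (G : SimpleGraph α) : SimpleGraph α where
  Adj x y := x ≠ y ∧ bisector G x y = ∅
  symm := by
    constructor
    rintro x y ⟨h1, h2⟩
    refine ⟨h1.symm, Set.eq_empty_iff_forall_notMem.mpr fun w hw => ?_⟩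
    exact Set.eq_empty_iff_forall_notMem.mp h2 w
      ((show G.dist w y = G.dist w x from hw).symm)
  loopless := ⟨fun _ h => h.1 rfl⟩

/-- A vertex cover of a graph: a set of vertices meeting every edge. -/
def IsVertexCover {α : Type*} (G : SimpleGraph α) (C : Set α) : Prop :=
  ∀ ⦃x y : α⦄, G.Adj x y → x ∈ C ∨ y ∈ C

/-- An independent set of a graph: a set of pairwise non-adjacent vertices. -/
def IsIndepSet {α : Type*} (G : SimpleGraph α) (A : Set α) : Prop :=
  ∀ ⦃x y : α⦄, x ∈ A → y ∈ A → ¬ G.Adj x y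

/-- The vertex cover number `β(G)`. -/
noncomputable def vcNum {α : Type*} (G : SimpleGraph α) : ℕ :=
  sInf {n | ∃ C : Set α, IsVertexCover G C ∧ C.ncard = n}

/-- The independence number `α(G)`. -/
noncomputable def indepNum {α : Type*} (G : SimpleGraph α) : ℕ :=
  sSup {n | ∃ A : Set α, IsIndepSet G A ∧ A.ncard = n}

/-- A forward-equalized pair `(X, Y)` of `G`: `X ∪ Y = V(G)` and for every
`a ∈ X \ Y` and `b ∈ Y \ X` there is `w` with `d(w,a) = d(w,b) + 1`. -/
def IsForwardEqualizedPair {α : Type*} (G : SimpleGraph α) (X Y : Set α) : Prop :=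
  X ∪ Y = Set.univ ∧
  ∀ ⦃a⦄, a ∈ X \ Y → ∀ ⦃b⦄, b ∈ Y \ X → ∃ w, G.dist w a = G.dist w b + 1

/-- `β*(G)`: the minimum of `|X ∩ Y|` over all pairs of vertex covers `X, Y` of the
empty bisector graph of `G` such that `(X, Y)` is a forward-equalized pair of `G`. -/
noncomputable def betaStar {α : Type*} (G : SimpleGraph α) : ℕ :=
  sInf {n | ∃ X Y : Set α,
    IsVertexCover (emptyBisector G) X ∧ IsVertexCover (emptyBisector G) Y ∧
    IsForwardEqualizedPair G X Y ∧ (X ∩ Y).ncard = n}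

/-- The corona product `G ⊙ H`: one copy of `H` for each vertex `i` of `G` (the vertices
`Sum.inr (i, w)`), with `i` joined to every vertex of its copy. -/
def corona (G : SimpleGraph V) (H : SimpleGraph W) : SimpleGraph (V ⊕ V × W) where
  Adj x y :=
    match x, y with
    | Sum.inl a, Sum.inl b => G.Adj a b
    | Sum.inl a, Sum.inr p => a = p.1
    | Sum.inr p, Sum.inl a => a = p.1
    | Sum.inr p, Sum.inr q => p.1 = q.1 ∧ H.Adj p.2 q.2
  symm := by
    constructor
    rintro (a | p) (b | q) h
    · exact h.symm
    · exact h
    · exact h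
    · exact ⟨h.1.symm, h.2.symm⟩
  loopless := by
    constructor
    rintro (a | p) h
    · exact G.irrefl h
    · exact H.irrefl h.2

/-!
In `G ⊙ H` the distance between two vertices is the distance in `G` between the vertices they lie
over, plus one for each endpoint lying in a copy of `H`; the only exception is a pair inside the
same copy of `H`.

Upper bound: the vertices of `A` together with all copies of `H` over `B` form a distance-equalizer
set. For two vertices outside it, bipartiteness makes "distance in `G` plus levels" even, so some
vertex `m` on a geodesic of `G` between them balances the two distances, and the vertex of the set
lying over `m` is equidistant to both.

Lower bound: a distance-equalizer set `S` meets every fibre (a vertex and a leaf of its copy of `H`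
can only be equalized from inside that fibre), and contains all leaves over `A` or all leaves over
`B`: a leaf over `a ∈ A` and one over `b ∈ B` could only be equalized from a vertex over `c` with
`d(c, a) = d(c, b)`, which parity forbids. Hence `|S| ≥ min(|A|·n(H) + |B|, |B|·n(H) + |A|)`.
-/
namespace SimpleGraph

variable {G : SimpleGraph V} {u v : V}

lemma Walk.le_add_length {f : V → ℕ} (hf : ∀ ⦃x y⦄, G.Adj x y → f x ≤ f y + 1)
    (p : G.Walk u v) : f u ≤ f v + p.length := by
  induction p with
  | nil => simp
  | cons h p ih =>
    have := hf h
    rw [Walk.length_cons]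
    omega

lemma Reachable.le_add_dist {f : V → ℕ} (h : G.Reachable u v)
    (hf : ∀ ⦃x y⦄, G.Adj x y → f x ≤ f y + 1) : f u ≤ f v + G.dist u v := by
  obtain ⟨p, hp⟩ := h.exists_walk_length_eq_dist
  exact hp ▸ p.le_add_length hf

lemma Adj.dist_le_dist_add_one {w : V} (h : G.Adj u v) : G.dist w u ≤ G.dist w v + 1 := by
  rcases h.symm.diff_dist_adj (u := w) with h | h | h <;> omega

/-- The witness is the vertex at distance `(d(u, v) + j - i) / 2` from `u` on a geodesic. -/
lemma Reachable.exists_dist_add_eq_dist_add (h : G.Reachable u v) {i j : ℕ}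
    (hi : i ≤ G.dist u v + j) (hj : j ≤ G.dist u v + i) (heven : Even (G.dist u v + i + j)) :
    ∃ m, G.dist u m + i = G.dist m v + j := by
  obtain ⟨p, hp⟩ := h.exists_walk_length_eq_dist
  obtain ⟨k, hk⟩ := heven
  refine ⟨p.getVert (k - i), ?_⟩
  have hum := dist_le (p.take (k - i))
  have hmv := dist_le (p.drop (k - i))
  have htri := (p.take (k - i)).reachable.dist_triangle_left v
  rw [Walk.take_length] at hum
  rw [Walk.drop_length] at hmv
  omega

end SimpleGraph

lemma eqdim_eq_ncard {α : Type*} {G : SimpleGraph α} {S : Set α} (hS : IsDistEqSet G S)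
    (hmin : ∀ T, IsDistEqSet G T → S.ncard ≤ T.ncard) : eqdim G = S.ncard :=
  le_antisymm (Nat.sInf_le ⟨S, hS, rfl⟩)
    (le_csInf ⟨_, S, hS, rfl⟩ fun _ ⟨T, hT, hTn⟩ => hTn ▸ hmin T hT)

lemma IsIndepSet.even_dist_iff {G : SimpleGraph V} {A : Set V} {u v : V} (hA : IsIndepSet G A)
    (hAc : IsIndepSet G Aᶜ) (h : G.Reachable u v) : Even (G.dist u v) ↔ (u ∈ A ↔ v ∈ A) := by
  classical
  let c : G.Coloring Bool := SimpleGraph.Coloring.mk (fun v => decide (v ∈ A)) fun {x y} hxy => by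
    by_cases hx : x ∈ A <;> by_cases hy : y ∈ A
    · exact absurd hxy (hA hx hy)
    · simp [hx, hy]
    · simp [hx, hy]
    · exact absurd hxy (hAc hx hy)
  obtain ⟨p, hp⟩ := h.exists_walk_length_eq_dist
  rw [← hp, c.even_length_iff_congr p]
  change (decide (u ∈ A) = true ↔ decide (v ∈ A) = true) ↔ _
  simp only [decide_eq_true_eq]

namespace corona

variable {G : SimpleGraph V} {H : SimpleGraph W} {A : Set V}

def base : V ⊕ V × W → V := Sum.elim id Prod.fst

def level : V ⊕ V × W → ℕ := Sum.elim (fun _ => 0) (fun _ => 1)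

@[simp] lemma base_inl (v : V) : base (Sum.inl v : V ⊕ V × W) = v := rfl
@[simp] lemma base_inr (p : V × W) : base (Sum.inr p : V ⊕ V × W) = p.1 := rfl
@[simp] lemma level_inl (v : V) : level (Sum.inl v : V ⊕ V × W) = 0 := rfl
@[simp] lemma level_inr (p : V × W) : level (Sum.inr p : V ⊕ V × W) = 1 := rfl

lemma level_le_one (x : V ⊕ V × W) : level x ≤ 1 := by
  rcases x with _ | _ <;> simp

lemma exists_walk (hG : G.Connected) (x y : V ⊕ V × W) :
    ∃ p : (corona G H).Walk x y, p.length = level x + G.dist (base x) (base y) + level y := by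
  have toBase : ∀ z, ∃ q : (corona G H).Walk z (Sum.inl (base z)), q.length = level z := by
    rintro (v | ⟨v, w⟩)
    · exact ⟨.nil, rfl⟩
    · exact ⟨(show (corona G H).Adj (Sum.inr (v, w)) (Sum.inl v) from rfl).toWalk, rfl⟩
  obtain ⟨qx, hqx⟩ := toBase x
  obtain ⟨qy, hqy⟩ := toBase y
  obtain ⟨p, hp⟩ := hG.exists_walk_length_eq_dist (base x) (base y)
  let f : G →g corona G H := ⟨Sum.inl, id⟩
  refine ⟨qx.append ((p.map f).append qy.reverse), ?_⟩
  simp [hqx, hqy, hp, add_assoc]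

lemma connected (hG : G.Connected) : (corona G H).Connected :=
  (SimpleGraph.connected_iff _).2 ⟨fun x y => (exists_walk hG x y).elim fun p _ => p.reachable,
    ⟨Sum.inl hG.nonempty.some⟩⟩

lemma dist_le (hG : G.Connected) (x y : V ⊕ V × W) :
    (corona G H).dist x y ≤ level x + G.dist (base x) (base y) + level y :=
  (exists_walk hG x y).elim fun p hp => hp ▸ SimpleGraph.dist_le p

lemma le_dist_inl (hG : G.Connected) (x : V ⊕ V × W) (v : V) :
    level x + G.dist (base x) v ≤ (corona G H).dist x (Sum.inl v) := by
  have := (connected (H := H) hG x (Sum.inl v)).le_add_dist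
    (f := fun z => level z + G.dist (base z) v) ?_
  · simpa using this
  rintro (a | ⟨a, z⟩) (b | ⟨b, w⟩) h
  · have := (show G.Adj a b from h).dist_le_dist_add_one (w := v)
    simp only [base_inl, level_inl, SimpleGraph.dist_comm (u := v)] at this ⊢
    omega
  all_goals
    obtain rfl : a = b := by simp only [corona] at h; tauto
    simp only [base_inl, base_inr, level_inl, level_inr]
    omega

lemma le_dist_inr (hG : G.Connected) {x : V ⊕ V × W} {a : V} (hx : base x ≠ a) (w : W) :
    level x + G.dist (base x) a + 1 ≤ (corona G H).dist x (Sum.inr (a, w)) := by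
  classical
  let f : V ⊕ V × W → ℕ :=
    Sum.elim (fun b => G.dist b a + 1) (fun q => if q.1 = a then 0 else G.dist q.1 a + 2)
  have := (connected (H := H) hG x (Sum.inr (a, w))).le_add_dist (f := f) ?_
  · have hfx : f x = level x + G.dist (base x) a + 1 := by
      rcases x with b | ⟨b, z⟩
      · simp [f]
      · simp only [base_inr] at hx
        simp only [f, Sum.elim_inr, if_neg hx, base_inr, level_inr]
        omega
    simpa [hfx, f] using this
  rintro (b | ⟨b, z⟩) (c | ⟨c, z'⟩) h
  · have := (show G.Adj b c from h).dist_le_dist_add_one (w := a)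
    simp only [f, Sum.elim_inl, SimpleGraph.dist_comm (v := a)] at this ⊢
    omega
  all_goals
    obtain rfl : b = c := by simp only [corona] at h; tauto
    by_cases hb : b = a <;> simp [f, hb]

lemma dist_eq (hG : G.Connected) {x y : V ⊕ V × W}
    (h : base x ≠ base y ∨ level x = 0 ∨ level y = 0) :
    (corona G H).dist x y = level x + G.dist (base x) (base y) + level y := by
  refine (dist_le hG x y).antisymm ?_
  rcases y with v | ⟨a, w⟩
  · simpa using le_dist_inl hG x v
  by_cases hx : base x = a
  · rcases x with b | _
    · simp only [base_inl] at hx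
      subst hx
      simpa [SimpleGraph.dist_comm] using le_dist_inl (H := H) hG (Sum.inr (b, w)) b
    · simp_all
  · simpa using le_dist_inr hG hx w

variable (W) in
def equalizer (A : Set V) : Set (V ⊕ V × W) := Sum.inl '' A ∪ Sum.inr '' (Aᶜ ×ˢ Set.univ)

lemma notMem_equalizer_iff {x : V ⊕ V × W} :
    x ∉ equalizer W A ↔ (level x = 1 ↔ base x ∈ A) := by
  rcases x with v | ⟨v, w⟩ <;> simp [equalizer]

lemma ncard_image_inr_prod [Fintype W] (C : Set V) :
    (Sum.inr '' (C ×ˢ Set.univ) : Set (V ⊕ V × W)).ncard = C.ncard * Fintype.card W := by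
  rw [Set.ncard_image_of_injective _ Sum.inr_injective, Set.ncard_prod, Set.ncard_univ,
    Nat.card_eq_fintype_card]

lemma ncard_equalizer [Fintype V] [Fintype W] (A : Set V) :
    (equalizer W A).ncard = Aᶜ.ncard * Fintype.card W + A.ncard := by
  rw [equalizer, Set.ncard_union_eq, Set.ncard_image_of_injective _ Sum.inl_injective,
    ncard_image_inr_prod, add_comm]
  exact Set.disjoint_left.2 (by simp)

lemma even_level_add_dist_add_level (hG : G.Connected) (hA : IsIndepSet G A)
    (hAc : IsIndepSet G Aᶜ) {x y : V ⊕ V × W} (hx : x ∉ equalizer W A) (hy : y ∉ equalizer W A) :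
    Even (level x + G.dist (base x) (base y) + level y) := by
  rw [notMem_equalizer_iff] at hx hy
  have hpar := hA.even_dist_iff hAc (hG (base x) (base y))
  have := level_le_one x
  have := level_le_one y
  rw [Nat.even_iff] at hpar ⊢
  by_cases hbx : base x ∈ A <;> by_cases hby : base y ∈ A <;> simp_all <;> omega

lemma exists_mem_equalizer_base_eq [Nonempty W] (m : V) :
    ∃ t ∈ equalizer W A, base t = m ∧
      ∀ z ∉ equalizer W A, base t ≠ base z ∨ level t = 0 ∨ level z = 0 := by
  by_cases hmA : m ∈ A
  · exact ⟨Sum.inl m, by simp [equalizer, hmA], rfl, fun _ _ => .inr (.inl rfl)⟩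
  refine ⟨Sum.inr (m, Classical.arbitrary W), by simp [equalizer, hmA], rfl, fun z hz => ?_⟩
  rw [notMem_equalizer_iff] at hz
  by_cases hzm : base z = m
  · have := level_le_one z
    have : level z ≠ 1 := fun h => hmA (hzm ▸ hz.1 h)
    omega
  · exact .inl (Ne.symm hzm)

lemma isDistEqSet_equalizer [Nonempty W] (hG : G.Connected) (hA : IsIndepSet G A)
    (hAc : IsIndepSet G Aᶜ) : IsDistEqSet (corona G H) (equalizer W A) := by
  intro x y hx hy _
  have heven := Nat.even_iff.1 (even_level_add_dist_add_level hG hA hAc hx hy)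
  have := level_le_one x
  have := level_le_one y
  obtain ⟨m, hm⟩ := (hG (base x) (base y)).exists_dist_add_eq_dist_add (i := level x)
    (j := level y) (by omega) (by omega) (Nat.even_iff.2 (by omega))
  obtain ⟨t, ht, rfl, hsep⟩ := exists_mem_equalizer_base_eq (A := A) (W := W) m
  refine ⟨t, ht, ?_⟩
  rw [dist_eq hG (hsep x hx), dist_eq hG (hsep y hy), SimpleGraph.dist_comm (u := base t)]
  omega

lemma exists_base_eq_of_isDistEqSet [Nonempty W] (hG : G.Connected) {S : Set (V ⊕ V × W)}
    (hS : IsDistEqSet (corona G H) S) (i : V) : ∃ t ∈ S, base t = i := by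
  by_contra! h
  obtain ⟨w⟩ := ‹Nonempty W›
  have hroot : Sum.inl i ∉ S := fun hi => h _ hi rfl
  have hleaf : Sum.inr (i, w) ∉ S := fun hi => h _ hi rfl
  obtain ⟨t, htS, ht⟩ := hS hroot hleaf (by simp)
  rw [dist_eq hG (.inl (h t htS)), dist_eq hG (.inl (h t htS))] at ht
  simp at ht

lemma inr_mem_or_inr_mem_of_isDistEqSet (hG : G.Connected) (hA : IsIndepSet G A)
    (hAc : IsIndepSet G Aᶜ) {S : Set (V ⊕ V × W)} (hS : IsDistEqSet (corona G H) S)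
    {a b : V} (ha : a ∈ A) (hb : b ∉ A) (za zb : W) :
    Sum.inr (a, za) ∈ S ∨ Sum.inr (b, zb) ∈ S := by
  by_contra! h
  have hab : a ≠ b := fun hab => hb (hab ▸ ha)
  obtain ⟨t, -, ht⟩ := hS h.1 h.2 (by simp [hab])
  have le_of_ne : ∀ {c d : V} {zc zd : W}, base t ≠ d →
      (corona G H).dist t (Sum.inr (c, zc)) = (corona G H).dist t (Sum.inr (d, zd)) →
      G.dist (base t) d ≤ G.dist (base t) c := by
    intro c d zc zd hd h
    have := dist_le (H := H) hG t (Sum.inr (c, zc))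
    rw [h, dist_eq hG (.inl hd)] at this
    simpa using this
  have hne : G.dist (base t) a ≠ G.dist (base t) b := fun h => by
    have hpa := hA.even_dist_iff hAc (hG (base t) a)
    have hpb := hA.even_dist_iff hAc (hG (base t) b)
    rw [h] at hpa
    tauto
  by_cases hta : base t = a
  · have := le_of_ne (hta ▸ hab) ht
    rw [hta, SimpleGraph.dist_self] at this hne
    omega
  · by_cases htb : base t = b
    · have := le_of_ne hta ht.symm
      rw [htb, SimpleGraph.dist_self] at this hne
      omega
    · exact hne ((le_of_ne htb ht).antisymm' (le_of_ne hta ht.symm))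

lemma ncard_le_of_forall_inr_mem [Fintype V] [Fintype W] {S : Set (V ⊕ V × W)} {C : Set V}
    (hbase : ∀ i, ∃ t ∈ S, base t = i) (hC : ∀ c ∈ C, ∀ z, Sum.inr (c, z) ∈ S) :
    C.ncard * Fintype.card W + Cᶜ.ncard ≤ S.ncard := by
  choose g hgS hg using hbase
  have hdisj : Disjoint (Sum.inr '' (C ×ˢ Set.univ) : Set (V ⊕ V × W)) (g '' Cᶜ) := by
    refine Set.disjoint_left.2 ?_
    rintro _ ⟨p, hp, rfl⟩ ⟨d, hd, hdp⟩
    exact hd (by rw [← hg d, hdp]; exact hp.1)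
  calc C.ncard * Fintype.card W + Cᶜ.ncard
      = (Sum.inr '' (C ×ˢ Set.univ) ∪ g '' Cᶜ).ncard := by
        rw [Set.ncard_union_eq hdisj, ncard_image_inr_prod,
          Set.ncard_image_of_injective _ (Function.LeftInverse.injective hg)]
    _ ≤ S.ncard := Set.ncard_le_ncard (Set.union_subset
        (by rintro _ ⟨p, hp, rfl⟩; exact hC p.1 hp.1 p.2) (by rintro _ ⟨d, -, rfl⟩; exact hgS d))

end corona

/-- If `G` is connected bipartite with partite sets `A`, `B` and
`|A| ≥ |B|`, then `ξ(G ⊙ H) = |B|·n(H) + |A|`. -/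
theorem eqdim_corona_of_bipartite [Fintype V] [Fintype W] [Nonempty W]
    (G : SimpleGraph V) (H : SimpleGraph W) (hG : G.Connected)
    (A B : Set V) (hUnion : A ∪ B = Set.univ) (hDisj : Disjoint A B)
    (hA : IsIndepSet G A) (hB : IsIndepSet G B) (hcard : B.ncard ≤ A.ncard) :
    eqdim (corona G H) = B.ncard * Fintype.card W + A.ncard := by
  obtain rfl : B = Aᶜ := (IsCompl.of_eq hDisj.eq_bot hUnion).compl_eq.symm
  refine (eqdim_eq_ncard (corona.isDistEqSet_equalizer hG hA hB) fun S hS => ?_).trans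
    (corona.ncard_equalizer A)
  have hbase := corona.exists_base_eq_of_isDistEqSet hG hS
  rw [corona.ncard_equalizer]
  by_cases! hleaves : ∀ b ∈ Aᶜ, ∀ z, Sum.inr (b, z) ∈ S
  · simpa using corona.ncard_le_of_forall_inr_mem hbase hleaves
  obtain ⟨b, hb, zb, hzb⟩ := hleaves
  have := corona.ncard_le_of_forall_inr_mem hbase fun a ha za =>
    (corona.inr_mem_or_inr_mem_of_isDistEqSet hG hA hB hS ha hb za zb).resolve_right hzb
  have : 1 ≤ Fintype.card W := Fintype.card_pos
  nlinarith
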